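/- Fix an integer k ≥ 3. Let V_k be the set of natural numbers n such that there is no set S of k−1 natural numbers with every element of S a bit-member of n (i.e., Nat.testBit n a = true for each a ∈ S) and every two distinct elements a, b of S satisfying Nat.testBit a b = true or Nat.testBit b a = true. Consider the simple graph G_k on V_k in which distinct m, n are adjacent iff Nat.testBit m n = true or Nat.testBit n m = true. Then: (1) G_k contains no clique on k vertices; (2) G_k has the extension property relative to the class of K_k-free graphs: for any disjoint finite sets J, D ⊆ V_k such that J contains no (k−1)-element clique of G_k, there exists v ∈ V_k, lying in neither J nor D, adjacent in G_k to every element of J and to no element of D. -/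

import Mathlib

/-- The vertex set: naturals `n` containing no "complete" set of `k - 1` bit-members. -/
def Vk (k : ℕ) : Set ℕ :=
  {n | ¬ ∃ S : Finset ℕ, S.card = k - 1 ∧ (∀ a ∈ S, Nat.testBit n a = true) ∧
    ∀ a ∈ S, ∀ b ∈ S, a ≠ b → (Nat.testBit a b = true ∨ Nat.testBit b a = true)}

/-- The bit graph induced on `Vk k`. -/
def Gk (k : ℕ) : SimpleGraph (Vk k) where
  Adj m n := (m : ℕ) ≠ (n : ℕ) ∧
    (Nat.testBit (m : ℕ) (n : ℕ) = true ∨ Nat.testBit (n : ℕ) (m : ℕ) = true)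
  symm := ⟨fun m n ⟨h, h'⟩ => ⟨h.symm, h'.symm⟩⟩
  loopless := ⟨fun m ⟨h, _⟩ => h rfl⟩


/-!
Bit-membership is decreasing (`m.testBit n` forces `n < m`), so the largest vertex of a
`k`-clique of `Gk k` has the other `k - 1` vertices as a complete set of bits, which `Vk k` forbids.

For the extension property take `t = 2 ^ c` above every vertex of `J ∪ D` and let `v` be
the number whose bits are `J ∪ {t}`. No element of `J` is bit-related to `t`, so a complete
set of `k - 1 ≥ 2` bits of `v` is a `(k - 1)`-clique inside `J`, hence `v ∈ Vk k`. Since `v`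
exceeds every vertex of `J ∪ D`, its neighbours there are exactly its bits, namely `J`.
-/

open Finset

lemma Nat.testBit_sum_two_pow (s : Finset ℕ) (i : ℕ) :
    (∑ a ∈ s, 2 ^ a).testBit i = true ↔ i ∈ s := by
  rw [← Nat.mem_bitIndices, ← List.mem_toFinset, toFinset_bitIndices_sum_two_pow]

lemma SimpleGraph.IsClique.subset_of_subset_insert {α : Type*} {G : SimpleGraph α}
    [DecidableEq α] {S T : Finset α} {t : α} (hS : G.IsClique (S : Set α)) (hcard : 1 < #S)
    (hST : S ⊆ Insert.insert t T) (ht : ∀ a ∈ T, ¬ G.Adj t a) : S ⊆ T := by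
  have htS : t ∉ S := by
    intro htS
    obtain ⟨a, haS, hat⟩ := exists_mem_ne hcard t
    exact ht a ((mem_insert.1 (hST haS)).resolve_left hat) (hS htS haS hat.symm)
  exact (subset_insert_iff_of_notMem htS).1 hST

lemma SimpleGraph.exists_isNClique_induce_of_subset_map {α : Type*} {G : SimpleGraph α}
    {s : Set α} {n : ℕ} {J : Finset s} {T : Finset α} (hTJ : T ⊆ J.map (.subtype _))
    (hT : G.IsNClique n T) : ∃ t ⊆ J, (G.induce s).IsNClique n t := by
  classical
  have hTs : ∀ a ∈ T, a ∈ s := fun a ha => by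
    obtain ⟨y, -, rfl⟩ := mem_map.1 (hTJ ha); exact y.2
  refine ⟨T.subtype (· ∈ s), fun y hy => ?_, ?_⟩
  · obtain ⟨z, hz, hzy⟩ := mem_map.1 (hTJ (mem_subtype.1 hy))
    rwa [← Subtype.ext hzy]
  · rwa [isNClique_induce_iff, subtype_map_of_mem hTs]

def bitGraph : SimpleGraph ℕ := SimpleGraph.fromRel fun m n => m.testBit n = true

lemma bitGraph_adj_of_lt {m n : ℕ} (h : m < n) : bitGraph.Adj n m ↔ n.testBit m = true := by
  have : m.testBit n = false := Nat.testBit_lt_two_pow (h.trans n.lt_two_pow_self)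
  simp [bitGraph, h.ne', this]

lemma bitGraph_adj_sum_two_pow_iff {s : Finset ℕ} {a : ℕ} (h : a < ∑ i ∈ s, 2 ^ i) :
    bitGraph.Adj (∑ i ∈ s, 2 ^ i) a ↔ a ∈ s := by
  rw [bitGraph_adj_of_lt h, Nat.testBit_sum_two_pow]

lemma bitGraph_not_adj_two_pow {a c : ℕ} (h : a < c) : ¬ bitGraph.Adj (2 ^ c) a := by
  simp [bitGraph_adj_of_lt (h.trans c.lt_two_pow_self), h.ne']

lemma exists_isNClique_bits_of_isNClique_succ {n : ℕ} {S : Finset ℕ}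
    (hS : bitGraph.IsNClique (n + 1) S) :
    ∃ x ∈ S, ∃ T : Finset ℕ, (∀ a ∈ T, x.testBit a = true) ∧ bitGraph.IsNClique n T := by
  obtain ⟨x, hx, hmax⟩ := S.exists_max_image id (by rw [← card_pos, hS.card_eq]; omega)
  refine ⟨x, hx, S.erase x, fun a ha => ?_, hS.erase_of_mem hx⟩
  have hne := ne_of_mem_erase ha
  exact (bitGraph_adj_of_lt ((hmax a (mem_of_mem_erase ha)).lt_of_ne hne)).1
    (hS.isClique hx (mem_of_mem_erase ha) hne.symm)

lemma Gk_eq_induce (k : ℕ) : Gk k = bitGraph.induce (Vk k) := rfl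

lemma notMem_Vk_iff {k n : ℕ} : n ∉ Vk k ↔
    ∃ S : Finset ℕ, (∀ a ∈ S, n.testBit a = true) ∧ bitGraph.IsNClique (k - 1) S := by
  simp only [Vk, Set.mem_ofPred_eq, not_not, SimpleGraph.isNClique_iff, SimpleGraph.isClique_iff,
    Set.Pairwise, bitGraph, SimpleGraph.fromRel_adj, mem_coe]
  grind

lemma Gk_cliqueFree {k : ℕ} (hk : 1 ≤ k) : (Gk k).CliqueFree k := by
  obtain ⟨n, rfl⟩ := Nat.exists_eq_add_of_le' hk
  intro s hs
  rw [Gk_eq_induce, SimpleGraph.isNClique_induce_iff] at hs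
  obtain ⟨x, hx, T, hT⟩ := exists_isNClique_bits_of_isNClique_succ hs
  obtain ⟨y, -, rfl⟩ := mem_map.1 hx
  exact notMem_Vk_iff.2 ⟨T, hT⟩ y.2

lemma sum_two_pow_insert_mem_Vk {k : ℕ} (hk : 3 ≤ k) {J : Finset (Vk k)}
    (hJ : ¬ ∃ s ⊆ J, (Gk k).IsNClique (k - 1) s) {t : ℕ}
    (ht : ∀ j ∈ J, ¬ bitGraph.Adj t j) :
    ∑ a ∈ insert t (J.map (.subtype _)), 2 ^ a ∈ Vk k := by
  by_contra hv
  obtain ⟨S, hSv, hS⟩ := notMem_Vk_iff.1 hv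
  have hSJ : S ⊆ J.map (.subtype _) :=
    hS.isClique.subset_of_subset_insert (by rw [hS.card_eq]; omega)
      (fun a ha => (Nat.testBit_sum_two_pow _ a).1 (hSv a ha)) (by simpa using ht)
  exact hJ (SimpleGraph.exists_isNClique_induce_of_subset_map hSJ hS)

/-- `Gk k` is `K_k`-free and has the extension property relative to `K_k`-free graphs. -/
theorem Gk_cliqueFree_and_extension (k : ℕ) (hk : 3 ≤ k) :
    (Gk k).CliqueFree k ∧
    ∀ J D : Finset (Vk k), Disjoint J D →
      (¬ ∃ s : Finset (Vk k), s ⊆ J ∧ (Gk k).IsNClique (k - 1) s) →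
      ∃ v : Vk k, v ∉ J ∧ v ∉ D ∧ (∀ j ∈ J, (Gk k).Adj v j) ∧ ∀ d ∈ D, ¬ (Gk k).Adj v d := by
  refine ⟨Gk_cliqueFree (by omega), fun J D hJD hJ => ?_⟩
  obtain ⟨c, hc⟩ : ∃ c, ∀ x ∈ J ∪ D, (x : ℕ) < c :=
    ⟨(J ∪ D).sup Subtype.val + 1, fun x hx => Nat.lt_succ_of_le (le_sup hx)⟩
  set T := insert (2 ^ c) (J.map (.subtype _))
  have hv : ∑ a ∈ T, 2 ^ a ∈ Vk k :=
    sum_two_pow_insert_mem_Vk hk hJ fun j hj =>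
      bitGraph_not_adj_two_pow (hc j (mem_union_left _ hj))
  have hlt : ∀ x ∈ J ∪ D, (x : ℕ) < ∑ a ∈ T, 2 ^ a := fun x hx =>
    (hc x hx).trans (c.lt_two_pow_self.trans (lt_geomSum_of_mem le_rfl (mem_insert_self _ _)))
  have hadj : ∀ x ∈ J ∪ D, (Gk k).Adj ⟨_, hv⟩ x ↔ x ∈ J := fun x hx => by
    rw [Gk_eq_induce, SimpleGraph.induce_adj, bitGraph_adj_sum_two_pow_iff (hlt x hx)]
    simp [T, ((hc x hx).trans c.lt_two_pow_self).ne]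
  refine ⟨⟨_, hv⟩, fun h => (hlt _ (mem_union_left _ h)).false,
    fun h => (hlt _ (mem_union_right _ h)).false, fun j hj => (hadj j (mem_union_left _ hj)).2 hj,
    fun d hd h => disjoint_left.1 hJD ((hadj d (mem_union_right _ hd)).1 h) hd⟩
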